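/- arXiv:1402.6377 — 9 statements merged into one kernel-verified Lean document; each statement's English description precedes it below -/
import Mathlib

section
/- Let d ≥ 1 and let f and f' be binary strings with |f| ≤ d and |f'| ≤ d. If the generalized Fibonacci cubes Q_d(f) and Q_d(f') are isomorphic as graphs, then |f| = |f'|. -/
/-- Two binary strings differ in exactly one position. -/
def cubeRel (v w : List Bool) : Prop :=
  (List.zipWith (fun a b => a != b) v w).count true = 1

/-- The generalized Fibonacci cube `Q_d(f)`: the subgraph of the `d`-cube induced on
binary strings of length `d` not containing `f` as a consecutive substring. -/
def genFib (d : ℕ) (f : List Bool) :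
    SimpleGraph {w : List Bool // w.length = d ∧ ¬ f <:+: w} :=
  SimpleGraph.fromRel fun v w => cubeRel v.1 w.1

/-- Hamming distance between binary strings (of equal length). -/
def hDist (v w : List Bool) : ℕ :=
  (List.zipWith (fun a b => a != b) v w).count true

/-- One less than the number of blocks of `f`: the number of indices `i ≥ 2`
with `f_{i-1} ≠ f_i`. -/
def nu (f : List Bool) : ℕ :=
  (List.zipWith (fun a b => a != b) f f.tail).count true

/-!
An isomorphism preserves the number of vertices, i.e. the number `#(avoiders f d)` of words of
length `d` avoiding `f`, so it suffices to show that this number strictly increases with `|f|`.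

Let `a n`, `b n` count the words of length `n` avoiding `u`, `v`, where `|u| < |v|`. The defect
`2 a n - a (n + 1)` counts the words of length `n + 1` whose first occurrence of `u` is at the
end. Every `u`-avoider `p` extends to such a word `p ++ β :: u` for one of the two letters `β`:
two occurrences of `u` straddling different letters would give `u` two periods which, by a
Fine–Wilf argument, force these letters to agree. So for `n ≥ |u|` the defect is at least
`a (n - |u|)`, and it is positive at `n = |u| - 1`. For `v`, cutting off the final `v` bounds
the defect by `b (n + 1 - |v|)`. Comparing coefficients in `B (1 - 2X) A = A (1 - 2X) B` for the
generating functions then gives `b d - a d ≥ b (d - |u|) > 0`.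
-/

open Finset

section Convolution

variable {R : Type*} [CommRing R]

theorem sum_antidiagonal_mul_sub_mul (a b : ℕ → R) (c : R) (n : ℕ) :
    ∑ p ∈ antidiagonal n,
        (b p.1 * (c * a p.2 - a (p.2 + 1)) - a p.1 * (c * b p.2 - b (p.2 + 1))) =
      a 0 * b (n + 1) - b 0 * a (n + 1) := by
  have hswap : ∀ m,
      ∑ p ∈ antidiagonal m, b p.1 * a p.2 = ∑ p ∈ antidiagonal m, a p.1 * b p.2 := by
    intro m
    rw [← Nat.sum_antidiagonal_swap]
    simp only [Prod.fst_swap, Prod.snd_swap, mul_comm]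
  have hab := Nat.sum_antidiagonal_succ' (n := n) (f := fun p => a p.1 * b p.2)
  have hba := Nat.sum_antidiagonal_succ' (n := n) (f := fun p => b p.1 * a p.2)
  rw [sum_congr rfl fun p _ =>
      show b p.1 * (c * a p.2 - a (p.2 + 1)) - a p.1 * (c * b p.2 - b (p.2 + 1)) =
        c * (b p.1 * a p.2 - a p.1 * b p.2) + (a p.1 * b (p.2 + 1) - b p.1 * a (p.2 + 1)) by ring,
    sum_add_distrib, ← mul_sum, sum_sub_distrib, sum_sub_distrib]
  linear_combination (c * hswap n) - hab + hba - hswap (n + 1)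

theorem sum_antidiagonal_ite_mul_sub_mul_eq_zero (a b : ℕ → R) (k n : ℕ) :
    ∑ p ∈ antidiagonal n,
      (if k ≤ p.2 then b p.1 * a (p.2 - k) - a p.1 * b (p.2 - k) else 0) = 0 := by
  induction k generalizing n with
  | zero =>
    simp only [zero_le, if_true, Nat.sub_zero, sum_sub_distrib, sub_eq_zero]
    rw [← Nat.sum_antidiagonal_swap]
    simp only [Prod.fst_swap, Prod.snd_swap, mul_comm]
  | succ k ih =>
    cases n with
    | zero => simp
    | succ n =>
      rw [Nat.sum_antidiagonal_succ', if_neg (by omega), zero_add]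
      simpa only [Nat.add_le_add_iff_right, Nat.add_sub_add_right] using ih n

/-- The coefficientwise comparison behind `B (1 - c X) A = A (1 - c X) B`. -/
theorem apply_succ_lt_of_defect_bounds {a b : ℕ → ℤ} {c : ℤ} {k l : ℕ} (h0 : a 0 = b 0)
    (ha : ∀ n, 0 ≤ a n) (hb : ∀ n, 0 < b n)
    (hA : ∀ j,
      (if j = l then 1 else 0) + (if k ≤ j then a (j - k) else 0) ≤ c * a j - a (j + 1))
    (hB : ∀ j, c * b j - b (j + 1) ≤ if k ≤ j then b (j - k) else 0)
    {n : ℕ} (hn : l ≤ n) : a (n + 1) < b (n + 1) := by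
  have hterm : ∀ p ∈ antidiagonal n,
      (if p.2 = l then b p.1 else 0) +
        (if k ≤ p.2 then b p.1 * a (p.2 - k) - a p.1 * b (p.2 - k) else 0) ≤
      b p.1 * (c * a p.2 - a (p.2 + 1)) - a p.1 * (c * b p.2 - b (p.2 + 1)) := by
    intro p _
    have hA' := mul_le_mul_of_nonneg_left (hA p.2) (hb p.1).le
    have hB' := mul_le_mul_of_nonneg_left (hB p.2) (ha p.1)
    split_ifs at hA' hB' ⊢ <;> linarith
  have hsingle : ∑ p ∈ antidiagonal n, (if p.2 = l then b p.1 else 0) = b (n - l) := by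
    rw [sum_eq_single_of_mem (n - l, l) (HasAntidiagonal.mem_antidiagonal.2 (by omega)),
      if_pos rfl]
    rintro ⟨i, j⟩ hij hne
    rw [HasAntidiagonal.mem_antidiagonal] at hij
    exact if_neg fun h => hne (by simp only at h; ext <;> simp <;> omega)
  have hsum := sum_le_sum hterm
  rw [sum_add_distrib, hsingle, sum_antidiagonal_ite_mul_sub_mul_eq_zero,
    sum_antidiagonal_mul_sub_mul, h0] at hsum
  nlinarith [hb (n - l), hb 0]

section Lists

variable {α : Type*}

/-- Fine–Wilf for `x` on `[0, a + b]` with periods `a + 1` and `b + 1`. -/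
theorem apply_eq_apply_of_periodic (x : ℕ → α) {a b : ℕ}
    (h₁ : ∀ k < b, x k = x (k + a + 1)) (h₂ : ∀ k < a, x k = x (k + b + 1)) :
    x a = x b := by
  rcases lt_trichotomy a b with hab | rfl | hab
  · have h₂' : ∀ k < a, x k = x (k + (b - a - 1) + 1) := fun k hk => by
      rw [h₂ k hk, h₁ (k + (b - a - 1) + 1) (by omega)]
      congr 1
      omega
    calc x a = x (b - a - 1) := apply_eq_apply_of_periodic x (fun k hk => h₁ k (by omega)) h₂'
      _ = x b := by rw [h₁ (b - a - 1) (by omega), show b - a - 1 + a + 1 = b by omega]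
  · rfl
  · have h₁' : ∀ k < b, x k = x (k + (a - b - 1) + 1) := fun k hk => by
      rw [h₁ k hk, h₂ (k + (a - b - 1) + 1) (by omega)]
      congr 1
      omega
    calc x a = x (a - b - 1) := by
          rw [h₂ (a - b - 1) (by omega), show a - b - 1 + b + 1 = a by omega]
      _ = x b := apply_eq_apply_of_periodic x h₁' (fun k hk => h₂ k (by omega))
termination_by a + b

/-- `r <+: u` gives `u` the period `|s| + 1`, and `s <:+ s'` gives the prefix `s'` the period
`|s'| - |s|`. -/
theorem List.eq_of_append_cons_eq_append_cons {u s s' r r' : List α} {b b' : α}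
    (h : u = s ++ b :: r) (h' : u = s' ++ b' :: r') (hs : s <:+ s') (hr : r <+: u) : b = b' := by
  obtain ⟨z, rfl⟩ := hs
  rcases eq_or_ne z [] with rfl | hz
  · rw [h, List.nil_append, List.append_cancel_left_eq, List.cons_eq_cons] at h'
    exact h'.1
  replace hz : 0 < z.length := List.length_pos_iff.2 hz
  set x : ℕ → Option α := fun k => u[k]?
  set t := s.length
  have hlen : u.length = t + 1 + r.length := by simp [h, t]; omega
  have hlen' : u.length = z.length + t + 1 + r'.length := by simp [h', t]; omega
  have hx_t : x t = some b := by simp [x, h, t]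
  have hx_T : x (z.length + t) = some b' := by
    simp only [x, h', List.append_assoc]
    rw [List.getElem?_append_right (by omega), List.getElem?_append_right (by omega)]
    simp [t]
  have hper : ∀ k, k + t + 1 < u.length → x (k + t + 1) = x k := by
    intro k hk
    have hr' : r[k]? = u[k]? := by
      rw [List.prefix_iff_eq_take.1 hr, List.getElem?_take, if_pos (by omega)]
    simp only [x]
    rw [← hr', h, List.getElem?_append_right (by omega)]
    simp [t, show k + s.length + 1 - s.length = k + 1 by omega]
  have hshift : ∀ k < t, x k = x (k + z.length) := by
    intro k hk
    simp only [x]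
    nth_rw 1 [h]
    rw [h', List.getElem?_append_left (by omega), List.append_assoc,
      List.getElem?_append_right (by omega), List.getElem?_append_left (by omega)]
    simp
  have key : x t = x (z.length - 1) :=
    apply_eq_apply_of_periodic x (fun k hk => (hper k (by omega)).symm)
      (fun k hk => by rw [hshift k hk]; congr 1; omega)
  have hT : x (z.length + t) = x (z.length - 1) := by
    rw [← hper (z.length - 1) (by omega), show z.length - 1 + t + 1 = z.length + t by omega]
  simpa [hx_t, hx_T] using key.trans hT.symm

theorem List.exists_eq_append_cons_of_infix_append_cons {u p w : List α} {β : α}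
    (hp : ¬ u <:+: p) (hw : w.length < u.length) (h : u <:+: p ++ β :: w) :
    ∃ s r, u = s ++ β :: r ∧ s <:+ p ∧ r <+: w := by
  obtain ⟨x, y, hxy⟩ := h
  rw [List.append_assoc, List.append_eq_append_iff] at hxy
  rcases hxy with ⟨s, rfl, hs⟩ | ⟨c, rfl, hc⟩
  · rcases List.append_eq_append_iff.1 hs with ⟨t, rfl, -⟩ | ⟨_ | ⟨γ, r⟩, rfl, hr⟩
    · exact absurd ⟨x, t, by simp⟩ hp
    · exact absurd ⟨x, [], by simp⟩ hp
    · obtain ⟨rfl, rfl⟩ := List.cons_eq_cons.1 hr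
      exact ⟨s, r, rfl, List.suffix_append x s, List.prefix_append r y⟩
  · have hlen := congrArg List.length hc
    simp only [List.length_cons, List.length_append] at hlen
    obtain rfl : c = [] := List.length_eq_zero_iff.1 (by omega)
    obtain rfl : y = [] := List.length_eq_zero_iff.1 (by omega)
    exact ⟨[], w, by simpa using hc.symm, List.nil_suffix, List.prefix_refl w⟩

end Lists

theorem List.exists_not_infix_append_cons_dropLast {u p : List Bool} (hp : ¬ u <:+: p) :
    ∃ β, ¬ u <:+: p ++ β :: u.dropLast := by
  by_contra! h
  have hu : u ≠ [] := by rintro rfl; exact hp List.nil_infix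
  have hw : u.dropLast.length < u.length := by
    simpa using List.length_pos_iff.2 hu
  obtain ⟨s₀, r₀, h₀, hs₀, hr₀⟩ :=
    exists_eq_append_cons_of_infix_append_cons hp hw (h false)
  obtain ⟨s₁, r₁, h₁, hs₁, hr₁⟩ :=
    exists_eq_append_cons_of_infix_append_cons hp hw (h true)
  rcases suffix_or_suffix_of_suffix hs₀ hs₁ with hs | hs
  · exact Bool.false_ne_true <|
      eq_of_append_cons_eq_append_cons h₀ h₁ hs (hr₀.trans (dropLast_prefix u))
  · exact Bool.false_ne_true <| Eq.symm <|
      eq_of_append_cons_eq_append_cons h₁ h₀ hs (hr₁.trans (dropLast_prefix u))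

def binaryWords (n : ℕ) : Finset (List Bool) :=
  (univ : Finset (Fin n → Bool)).map ⟨List.ofFn, List.ofFn_injective⟩

@[simp]
theorem mem_binaryWords {n : ℕ} {w : List Bool} : w ∈ binaryWords n ↔ w.length = n := by
  simp only [binaryWords, mem_map, mem_univ, true_and, Function.Embedding.coeFn_mk]
  constructor
  · rintro ⟨f, rfl⟩
    exact List.length_ofFn
  · rintro rfl
    exact ⟨fun i => w[i], List.ofFn_getElem⟩

theorem card_binaryWords (n : ℕ) : #(binaryWords n) = 2 ^ n := by
  simp [binaryWords]

def avoiders (u : List Bool) (n : ℕ) : Finset (List Bool) :=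
  (binaryWords n).filter fun w => ¬ u <:+: w

def firstOccurrenceAtEnd (u : List Bool) (n : ℕ) : Finset (List Bool) :=
  (binaryWords n).filter fun w => u <:+ w ∧ ¬ u <:+: w.dropLast

@[simp]
theorem mem_avoiders {u w : List Bool} {n : ℕ} :
    w ∈ avoiders u n ↔ w.length = n ∧ ¬ u <:+: w := by
  simp [avoiders]

@[simp]
theorem mem_firstOccurrenceAtEnd {u w : List Bool} {n : ℕ} :
    w ∈ firstOccurrenceAtEnd u n ↔ w.length = n ∧ u <:+ w ∧ ¬ u <:+: w.dropLast := by
  simp [firstOccurrenceAtEnd]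

theorem natCard_eq_card_avoiders (u : List Bool) (n : ℕ) :
    Nat.card {w : List Bool // w.length = n ∧ ¬ u <:+: w} = #(avoiders u n) := by
  rw [← Nat.card_eq_finsetCard]
  exact Nat.card_congr (Equiv.subtypeEquivRight fun w => mem_avoiders.symm)

theorem avoiders_nil (n : ℕ) : avoiders [] n = ∅ := by
  ext w
  simp [List.nil_infix]

theorem card_avoiders_of_lt_length {u : List Bool} {n : ℕ} (h : n < u.length) :
    #(avoiders u n) = 2 ^ n := by
  rw [avoiders, filter_true_of_mem, card_binaryWords]
  intro w hw hu
  have := hu.length_le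
  rw [mem_binaryWords.1 hw] at this
  omega

theorem card_avoiders_le_succ {u : List Bool} (hu : u ≠ []) (n : ℕ) :
    #(avoiders u n) ≤ #(avoiders u (n + 1)) := by
  refine card_le_card_of_injOn (· ++ [!u.getLast hu]) (fun w hw => ?_)
    (fun w _ w' _ h => List.append_cancel_right h)
  rw [mem_coe, mem_avoiders] at hw ⊢
  refine ⟨by simp [hw.1], ?_⟩
  rw [List.infix_concat_iff]
  rintro (hsuf | hinf)
  · simpa [List.getLast_append_singleton] using hsuf.getLast hu
  · exact hw.2 hinf

theorem card_avoiders_pos {u : List Bool} (hu : u ≠ []) (n : ℕ) : 0 < #(avoiders u n) :=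
  calc 0 < #(avoiders u 0) := by rw [card_avoiders_of_lt_length (List.length_pos_iff.2 hu)]; simp
    _ ≤ #(avoiders u n) := monotone_nat_of_le_succ (card_avoiders_le_succ hu) n.zero_le

theorem two_mul_card_avoiders (u : List Bool) (n : ℕ) :
    2 * #(avoiders u n) = #(avoiders u (n + 1)) + #(firstOccurrenceAtEnd u (n + 1)) := by
  have himage : (avoiders u n ×ˢ (univ : Finset Bool)).image (fun q => q.1 ++ [q.2]) =
      avoiders u (n + 1) ∪ firstOccurrenceAtEnd u (n + 1) := by
    ext w
    simp only [mem_image, mem_product, mem_avoiders, mem_univ, and_true, Prod.exists, mem_union,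
      mem_firstOccurrenceAtEnd]
    constructor
    · rintro ⟨w, c, ⟨rfl, hw⟩, rfl⟩
      rw [List.dropLast_concat, List.infix_concat_iff]
      simp only [List.length_append, List.length_singleton, true_and]
      tauto
    · rintro (⟨hlen, hw⟩ | ⟨hlen, -, hw⟩)
      all_goals
        have hne : w ≠ [] := List.ne_nil_of_length_pos (by omega)
        refine ⟨w.dropLast, w.getLast hne, ⟨by simp [hlen], ?_⟩,
          List.dropLast_append_getLast hne⟩
      · exact fun h => hw (h.trans (List.dropLast_prefix w).isInfix)
      · exact hw
  have hdisj : Disjoint (avoiders u (n + 1)) (firstOccurrenceAtEnd u (n + 1)) :=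
    disjoint_left.2 fun w hw hw' =>
      (mem_avoiders.1 hw).2 (mem_firstOccurrenceAtEnd.1 hw').2.1.isInfix
  have hinj : Function.Injective fun q : List Bool × Bool => q.1 ++ [q.2] := by
    rintro ⟨w, c⟩ ⟨w', c'⟩ h
    obtain ⟨rfl, h⟩ := List.append_inj' h rfl
    simp_all
  rw [← card_union_of_disjoint hdisj, ← himage, card_image_of_injective _ hinj, card_product,
    card_univ, Fintype.card_bool, mul_comm]

theorem self_mem_firstOccurrenceAtEnd {u : List Bool} (hu : u ≠ []) :
    u ∈ firstOccurrenceAtEnd u u.length := by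
  refine mem_firstOccurrenceAtEnd.2 ⟨rfl, List.suffix_refl u, fun h => ?_⟩
  have := h.length_le
  have := List.length_pos_iff.2 hu
  simp only [List.length_dropLast] at *
  omega

theorem firstOccurrenceAtEnd_of_lt_length {u : List Bool} {n : ℕ} (h : n < u.length) :
    firstOccurrenceAtEnd u n = ∅ := by
  ext w
  simp only [mem_firstOccurrenceAtEnd, notMem_empty, iff_false, not_and]
  intro hw hsuf
  have := hsuf.length_le
  omega

theorem card_firstOccurrenceAtEnd_le (u : List Bool) (n : ℕ) :
    #(firstOccurrenceAtEnd u (n + u.length)) ≤ #(avoiders u n) := by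
  have hsplit : ∀ w ∈ firstOccurrenceAtEnd u (n + u.length),
      w = w.take n ++ u ∧ ¬ u <:+: w.take n := by
    intro w hw
    obtain ⟨hlen, ⟨x, rfl⟩, hw⟩ := mem_firstOccurrenceAtEnd.1 hw
    have hu : u ≠ [] := by rintro rfl; exact hw List.nil_infix
    have hx : x.length = n := by simpa using hlen
    rw [List.take_left' hx]
    refine ⟨rfl, fun h => hw (h.trans ?_)⟩
    rw [List.dropLast_append_of_ne_nil hu]
    exact (List.prefix_append _ _).isInfix
  refine card_le_card_of_injOn (·.take n) (fun w hw => ?_) (fun w hw w' hw' h => ?_)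
  · refine mem_avoiders.2 ⟨?_, (hsplit w hw).2⟩
    simp [(mem_firstOccurrenceAtEnd.1 hw).1]
  · rw [(hsplit w hw).1, (hsplit w' hw').1]
    simp only at h
    rw [h]

theorem card_avoiders_le_card_firstOccurrenceAtEnd (u : List Bool) (n : ℕ) :
    #(avoiders u n) ≤ #(firstOccurrenceAtEnd u (n + u.length + 1)) := by
  let β : List Bool → Bool := fun p => decide (u <:+: p ++ false :: u.dropLast)
  have hβ : ∀ p, ¬ u <:+: p → ¬ u <:+: p ++ β p :: u.dropLast := by
    intro p hp
    by_cases h : u <:+: p ++ false :: u.dropLast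
    · obtain ⟨_ | _, hγ⟩ := List.exists_not_infix_append_cons_dropLast hp
      · exact absurd h hγ
      · simpa [β, h] using hγ
    · simp [β, h]
  refine card_le_card_of_injOn (fun p => p ++ β p :: u) (fun p hp => ?_)
    (fun p hp p' hp' h => (List.append_inj h ?_).1)
  · obtain ⟨hlen, hp⟩ := mem_avoiders.1 hp
    have hu : u ≠ [] := by rintro rfl; exact hp List.nil_infix
    refine mem_firstOccurrenceAtEnd.2 ⟨by simp [hlen]; omega, ⟨p ++ [β p], by simp⟩, ?_⟩
    rw [List.dropLast_append_of_ne_nil (List.cons_ne_nil _ _), List.dropLast_cons_of_ne_nil hu]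
    exact hβ p hp
  · rw [(mem_avoiders.1 hp).1, (mem_avoiders.1 hp').1]

theorem card_avoiders_lt_card_avoiders {u v : List Bool} {d : ℕ} (huv : u.length < v.length)
    (hvd : v.length ≤ d) : #(avoiders u d) < #(avoiders v d) := by
  have hv : v ≠ [] := List.ne_nil_of_length_pos (by omega)
  rcases eq_or_ne u [] with rfl | hu
  · simpa [avoiders_nil] using card_avoiders_pos hv d
  obtain ⟨n, rfl⟩ : ∃ n, d = n + 1 := ⟨d - 1, by omega⟩
  have hsplit (w : List Bool) (j : ℕ) : (2 * #(avoiders w j) - #(avoiders w (j + 1)) : ℤ) =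
      #(firstOccurrenceAtEnd w (j + 1)) := by
    rw [sub_eq_iff_eq_add']
    exact_mod_cast two_mul_card_avoiders w j
  have hmono := monotone_nat_of_le_succ (card_avoiders_le_succ hu)
  have hu_pos := List.length_pos_iff.2 hu
  refine Int.ofNat_lt.1 <| apply_succ_lt_of_defect_bounds (a := fun j => (#(avoiders u j) : ℤ))
    (b := fun j => (#(avoiders v j) : ℤ)) (c := 2) (k := v.length - 1) (l := u.length - 1)
    (by simp [card_avoiders_of_lt_length, hu_pos, List.length_pos_iff.2 hv])
    (fun _ => by positivity) (fun j => by exact_mod_cast card_avoiders_pos hv j)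
    (fun j => ?_) (fun j => ?_) (by omega)
  · rw [hsplit]
    split_ifs with hl hk hk
    · omega
    · have hmem := self_mem_firstOccurrenceAtEnd hu
      rw [show u.length = j + 1 by omega] at hmem
      simpa using card_pos.2 ⟨_, hmem⟩
    · have h₁ := card_avoiders_le_card_firstOccurrenceAtEnd u (j - u.length)
      have h₂ := hmono (show j - (v.length - 1) ≤ j - u.length by omega)
      rw [show j - u.length + u.length + 1 = j + 1 by omega] at h₁
      simp only [zero_add]
      exact_mod_cast h₂.trans h₁
    · simp
  · rw [hsplit]
    split_ifs with hk
    · have := card_firstOccurrenceAtEnd_le v (j - (v.length - 1))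
      rw [show j - (v.length - 1) + v.length = j + 1 by omega] at this
      exact_mod_cast this
    · simp [firstOccurrenceAtEnd_of_lt_length (show j + 1 < v.length by omega)]

theorem stmt0_general (d : ℕ) (f f' : List Bool)
    (hf : f.length ≤ d) (hf' : f'.length ≤ d)
    (h : Nonempty (genFib d f ≃g genFib d f')) :
    f.length = f'.length := by
  obtain ⟨e⟩ := h
  have hcard : #(avoiders f d) = #(avoiders f' d) := by
    simpa only [natCard_eq_card_avoiders] using Nat.card_congr e.toEquiv
  rcases lt_trichotomy f.length f'.length with hlt | heq | hgt
  · exact absurd hcard (card_avoiders_lt_card_avoiders hlt hf').ne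
  · exact heq
  · exact absurd hcard (card_avoiders_lt_card_avoiders hgt hf).ne'

theorem stmt0 (d : ℕ) (hd : 1 ≤ d) (f f' : List Bool)
    (hf : f.length ≤ d) (hf' : f'.length ≤ d)
    (h : Nonempty (genFib d f ≃g genFib d f')) :
    f.length = f'.length :=
  stmt0_general d f f' hf hf' h
end Convolution
end

section
/- For every integer k ≥ 2 and every d with 1 ≤ d ≤ 3k−1, the generalized Fibonacci cubes Q_d(0^k 1^k) and Q_d(0^{k+1} 1^{k−1}) are isomorphic. -/
/-!
For `d < 2k` neither pattern fits into a string of length `d`, so both cubes are all of `Q_d`.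
Otherwise `d = 2k + m` with `m < k`. Remove the bit at position `k + m`, complement it and
reinsert it at position `k`: this is a coordinate permutation followed by a complementation,
hence an automorphism of `Q_d`. An occurrence `s 0^k 1^k t` has `|s| + |t| = m`, so position
`k + m` lies in its block of ones and position `k` in its block of zeros; the map therefore
turns it into `s 0^(k+1) 1^(k-1) t`, and conversely by injectivity.
-/

/-- Remove the bit at position `i + m`, complement it, and insert it at position `i`. -/
def moveFlip (i m : ℕ) (w : List Bool) : List Bool :=
  w.take i ++ (!(w.drop (i + m)).headI) :: ((w.drop i).take m ++ w.drop (i + m + 1))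

theorem moveFlip_append {i m : ℕ} {A M T : List Bool} (hA : A.length = i) (hM : M.length = m)
    (c : Bool) : moveFlip i m (A ++ (M ++ c :: T)) = A ++ (!c) :: (M ++ T) := by
  subst hA hM
  have hc : (A ++ (M ++ c :: T)).drop (A.length + M.length) = c :: T := by
    rw [← List.append_assoc, List.drop_left' (by simp)]
  have hT : (A ++ (M ++ c :: T)).drop (A.length + M.length + 1) = T := by
    rw [← List.drop_drop, hc, List.drop_one, List.tail_cons]
  simp [moveFlip, hc, hT]

theorem List.exists_eq_append_append_cons {α : Type*} {i m : ℕ} (w : List α)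
    (h : i + m < w.length) :
    ∃ A M c T, A.length = i ∧ M.length = m ∧ w = A ++ (M ++ c :: T) := by
  refine ⟨w.take i, (w.drop i).take m, w[i + m], w.drop (i + m + 1), by simp; omega,
    by simp; omega, ?_⟩
  rw [← List.append_assoc, ← List.take_add, ← List.drop_eq_getElem_cons h,
    List.take_append_drop]

theorem length_moveFlip {i m : ℕ} {w : List Bool} (h : i + m < w.length) :
    (moveFlip i m w).length = w.length := by
  obtain ⟨A, M, c, T, hA, hM, rfl⟩ := w.exists_eq_append_append_cons h
  simp [moveFlip_append hA hM]
  omega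

theorem moveFlip_injOn {i m d : ℕ} (h : i + m < d) :
    Set.InjOn (moveFlip i m) {w | w.length = d} := by
  intro v hv w hw hvw
  obtain ⟨A, M, c, T, hA, hM, rfl⟩ := v.exists_eq_append_append_cons (hv ▸ h)
  obtain ⟨A', M', c', T', hA', hM', rfl⟩ := w.exists_eq_append_append_cons (hw ▸ h)
  rw [moveFlip_append hA hM, moveFlip_append hA' hM'] at hvw
  obtain ⟨rfl, hcMT⟩ := List.append_inj hvw (hA.trans hA'.symm)
  obtain ⟨hc, hMT⟩ := List.cons_eq_cons.1 hcMT
  obtain ⟨rfl, rfl⟩ := List.append_inj hMT (hM.trans hM'.symm)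
  rw [Bool.not_inj hc]

theorem hDist_append {A A' B B' : List Bool} (h : A.length = A'.length) :
    hDist (A ++ B) (A' ++ B') = hDist A A' + hDist B B' := by
  simp only [hDist, List.zipWith_append h, List.count_append]

theorem hDist_cons (a b : Bool) (v w : List Bool) :
    hDist (a :: v) (b :: w) = hDist v w + (a != b).toNat := by
  cases a <;> cases b <;> simp [hDist]

theorem hDist_moveFlip {i m : ℕ} {v w : List Bool} (hv : i + m < v.length)
    (hw : w.length = v.length) :
    hDist (moveFlip i m v) (moveFlip i m w) = hDist v w := by
  obtain ⟨A, M, c, T, hA, hM, rfl⟩ := v.exists_eq_append_append_cons hv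
  obtain ⟨A', M', c', T', hA', hM', rfl⟩ := w.exists_eq_append_append_cons (hw ▸ hv)
  rw [moveFlip_append hA hM, moveFlip_append hA' hM']
  simp only [hDist_append (hA.trans hA'.symm), hDist_append (hM.trans hM'.symm), hDist_cons,
    Bool.not_bne_not]
  omega

theorem List.replicate_eq_append {α : Type*} {n a b : ℕ} (h : a + b = n) (x : α) :
    List.replicate n x = List.replicate a x ++ List.replicate b x := by
  rw [← h, List.replicate_add]

theorem moveFlip_replicate {k m : ℕ} (hm : m < k) {s t : List Bool}
    (hst : s.length + t.length = m) :
    moveFlip k m (s ++ (List.replicate k false ++ List.replicate k true) ++ t) =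
      s ++ (List.replicate (k + 1) false ++ List.replicate (k - 1) true) ++ t := by
  have hF : s ++ (List.replicate k false ++ List.replicate k true) ++ t =
      (s ++ List.replicate (k - s.length) false) ++
        ((List.replicate s.length false ++ List.replicate (m - s.length) true) ++
          true :: (List.replicate (k - 1 - (m - s.length)) true ++ t)) := by
    rw [List.replicate_eq_append (n := k) (a := k - s.length) (b := s.length) (by omega),
      List.replicate_eq_append (n := k) (a := m - s.length)
        (b := k - 1 - (m - s.length) + 1) (by omega) true, List.replicate_succ]
    simp only [List.append_assoc, List.cons_append]
  have hG : s ++ (List.replicate (k + 1) false ++ List.replicate (k - 1) true) ++ t =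
      (s ++ List.replicate (k - s.length) false) ++ false ::
        ((List.replicate s.length false ++ List.replicate (m - s.length) true) ++
          (List.replicate (k - 1 - (m - s.length)) true ++ t)) := by
    rw [List.replicate_eq_append (n := k + 1) (a := k - s.length) (b := s.length + 1)
        (by omega), List.replicate_succ,
      List.replicate_eq_append (n := k - 1) (a := m - s.length)
        (b := k - 1 - (m - s.length)) (by omega) true]
    simp only [List.append_assoc, List.cons_append]
  rw [hF, moveFlip_append (by simp; omega) (by simp; omega), hG, Bool.not_true]

theorem replicate_infix_iff_moveFlip {k m : ℕ} (hm : m < k) {w : List Bool}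
    (hw : w.length = 2 * k + m) :
    List.replicate k false ++ List.replicate k true <:+: w ↔
      List.replicate (k + 1) false ++ List.replicate (k - 1) true <:+: moveFlip k m w := by
  constructor
  · rintro ⟨s, t, rfl⟩
    exact ⟨s, t, (moveFlip_replicate hm (by simp at hw; omega)).symm⟩
  · rintro ⟨s, t, hst⟩
    have hlen := length_moveFlip (i := k) (m := m) (w := w) (by omega)
    rw [← hst, hw] at hlen
    simp only [List.length_append, List.length_replicate] at hlen
    refine ⟨s, t, moveFlip_injOn (i := k) (m := m) (d := 2 * k + m) (by omega)
      (by simp; omega) hw ?_⟩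
    rw [moveFlip_replicate hm (by omega), hst]

noncomputable def moveFlipEquiv {i m d : ℕ} (h : i + m < d) :
    {w : List Bool // w.length = d} ≃ {w : List Bool // w.length = d} :=
  haveI : Finite {w : List Bool // w.length = d} := inferInstanceAs (Finite (List.Vector Bool d))
  Equiv.ofBijective
    (fun w => ⟨moveFlip i m w, (length_moveFlip (by rw [w.2]; exact h)).trans w.2⟩) <|
    Finite.injective_iff_bijective.1 fun v w hvw =>
      Subtype.ext (moveFlip_injOn h v.2 w.2 (congrArg Subtype.val hvw))

theorem cubeRel_iff_hDist_eq_one {v w : List Bool} : cubeRel v w ↔ hDist v w = 1 := Iff.rfl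

def genFibIsoOfEquiv {d : ℕ} {f g : List Bool}
    (e : {w : List Bool // w.length = d} ≃ {w : List Bool // w.length = d})
    (hdist : ∀ v w, hDist (e v).1 (e w).1 = hDist v.1 w.1)
    (hinfix : ∀ w, f <:+: w.1 ↔ g <:+: (e w).1) : genFib d f ≃g genFib d g where
  toFun v := ⟨(e ⟨v.1, v.2.1⟩).1, (e _).2, fun h => v.2.2 ((hinfix _).2 h)⟩
  invFun w := ⟨(e.symm ⟨w.1, w.2.1⟩).1, (e.symm _).2,
    fun h => w.2.2 (by simpa using (hinfix _).1 h)⟩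
  left_inv v := by simp
  right_inv w := by simp
  map_rel_iff' {v w} := by
    simp only [genFib, SimpleGraph.fromRel_adj, cubeRel_iff_hDist_eq_one, Equiv.coe_fn_mk, hdist,
      ne_eq, Subtype.mk.injEq, ← Subtype.ext_iff, e.injective.eq_iff]

theorem stmt1_general (k d : ℕ) (hd1 : 1 ≤ d) (hd2 : d ≤ 3 * k - 1) :
    Nonempty (genFib d (List.replicate k false ++ List.replicate k true) ≃g
      genFib d (List.replicate (k + 1) false ++ List.replicate (k - 1) true)) := by
  rcases lt_or_ge d (2 * k) with hd | hd
  · refine ⟨genFibIsoOfEquiv (Equiv.refl _) (fun _ _ => rfl) fun w => iff_of_false ?_ ?_⟩ <;>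
      exact fun h => by have := h.length_le; simp [w.2] at this; omega
  · obtain ⟨m, rfl⟩ := Nat.exists_eq_add_of_le hd
    exact ⟨genFibIsoOfEquiv (moveFlipEquiv (i := k) (m := m) (by omega))
      (fun v w => hDist_moveFlip (by omega) (w.2.trans v.2.symm))
      fun w => replicate_infix_iff_moveFlip (by omega) w.2⟩

theorem stmt1 (k d : ℕ) (hk : 2 ≤ k) (hd1 : 1 ≤ d) (hd2 : d ≤ 3 * k - 1) :
    Nonempty (genFib d (List.replicate k false ++ List.replicate k true) ≃g
      genFib d (List.replicate (k + 1) false ++ List.replicate (k - 1) true)) :=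
  stmt1_general k d hd1 hd2
end

section
/- Let d ≥ 2 and let f and f' be binary strings of length d−1 with ν(f) = ν(f'). Then the generalized Fibonacci cubes Q_d(f) and Q_d(f') are isomorphic. -/
section

open Finset

lemma List.infix_iff_of_length_eq_succ {α : Type*} {f w : List α} (h : w.length = f.length + 1) :
    f <:+: w ↔ (∃ c, w = f ++ [c]) ∨ ∃ c, w = c :: f := by
  constructor
  · rintro ⟨s, t, rfl⟩
    simp only [List.length_append] at h
    rcases s with _ | ⟨c, s⟩
    · obtain ⟨c, rfl⟩ := List.length_eq_one_iff.mp (by simpa using h : t.length = 1)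
      exact Or.inl ⟨c, by simp⟩
    · obtain rfl : s = [] := List.length_eq_zero_iff.mp (by simp at h; omega)
      obtain rfl : t = [] := List.length_eq_zero_iff.mp (by simp at h; omega)
      exact Or.inr ⟨c, by simp⟩
  · rintro (⟨c, rfl⟩ | ⟨c, rfl⟩)
    · exact ⟨[], [c], by simp⟩
    · exact ⟨[c], [], by simp⟩

lemma List.count_true_ofFn {d : ℕ} (x : Fin d → Bool) :
    (List.ofFn x).count true = #{i | x i = true} := by
  rw [← Multiset.coe_count, ← Fin.univ_val_map, Multiset.count_map, card_def, filter_val]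
  exact congrArg _ (Multiset.filter_congr fun _ _ => eq_comm)

lemma exists_eq_iff_exists_eq_sub {K G : Type*} [AddGroup K] [AddGroup G] {u s : K → G} {t : G}
    {b : K} (h : ∀ c, u c - t = s (c - b)) (x : G) :
    (∃ c, x = u c) ↔ ∃ c, s c = x - t := by
  constructor
  · rintro ⟨c, rfl⟩
    exact ⟨c - b, (h c).symm⟩
  · rintro ⟨c, hc⟩
    exact ⟨c + b, sub_left_inj.mp (by rw [h, add_sub_cancel_right, hc])⟩

lemma Pi.single_comp_perm {α β : Type*} [DecidableEq α] [Zero β] {σ : Equiv.Perm α} {i : α}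
    (h : σ i = i) (c : β) : Pi.single i c ∘ σ = Pi.single i c := by
  funext j
  simp only [Function.comp_apply, Pi.single_apply, σ.injective.eq_iff' h]

lemma hammingDist_sub_right {ι β : Type*} [Fintype ι] [AddGroup β] [DecidableEq β]
    (x y t : ι → β) : hammingDist (x - t) (y - t) = hammingDist x y := by
  simp [hammingDist]

lemma hammingDist_add_right {ι β : Type*} [Fintype ι] [AddGroup β] [DecidableEq β]
    (x y t : ι → β) : hammingDist (x + t) (y + t) = hammingDist x y := by
  simp [hammingDist]

lemma hammingDist_comp_perm {ι β : Type*} [Fintype ι] [DecidableEq β] (σ : Equiv.Perm ι)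
    (x y : ι → β) : hammingDist (x ∘ σ) (y ∘ σ) = hammingDist x y :=
  card_equiv σ fun i => by simp

lemma Equiv.Perm.exists_comp_eq_of_card_eq {α : Type*} [Fintype α]
    {D D' : α → Bool} (K : Finset α) (hD : ∀ k ∈ K, D k = false) (hD' : ∀ k ∈ K, D' k = false)
    (hcard : #{i | D i = true} = #{i | D' i = true}) :
    ∃ σ : Equiv.Perm α, (∀ k ∈ K, σ k = k) ∧ D ∘ σ = D' := by
  let e : {i // D' i = true} ≃ {i // D i = true} :=
    Fintype.equivOfCardEq (by simp only [Fintype.card_subtype, hcard])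
  obtain ⟨σ, hσ⟩ := Equiv.Perm.exists_extending_pair
    (Sum.elim Subtype.val Subtype.val : {i // D' i = true} ⊕ K → α)
    (Sum.elim (fun i => (e i).1) Subtype.val)
    (Subtype.val_injective.sumElim Subtype.val_injective fun i k h => by
      simpa [h, hD' k k.2] using i.2)
    ((Subtype.val_injective.comp e.injective).sumElim Subtype.val_injective
      fun i k (h : (e i).1 = k.1) => by
      simpa [h, hD k k.2] using (e i).2)
  refine ⟨σ, fun k hk => hσ (Sum.inr ⟨k, hk⟩), funext fun i => ?_⟩
  cases hi : D' i
  · by_contra hσi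
    let j := e.symm ⟨σ i, by simpa using hσi⟩
    have hj : σ j = σ i := by simpa [j] using hσ (Sum.inl j)
    simpa [σ.injective hj, hi] using j.2
  · have hσi : σ i = e ⟨i, hi⟩ := hσ (Sum.inl ⟨i, hi⟩)
    simpa [hσi] using (e ⟨i, hi⟩).2

end

namespace GenFib

open Finset

def vec (d : ℕ) (l : List Bool) : Fin d → Bool := fun i => l.getD i false

lemma ofFn_vec {d : ℕ} {l : List Bool} (h : l.length = d) : List.ofFn (vec d l) = l := by
  apply List.ext_getElem (by simp [h])
  intro i _ hi
  simp [vec, hi]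

lemma vec_ofFn {d : ℕ} (x : Fin d → Bool) : vec d (List.ofFn x) = x := by
  funext i
  simp [vec]

lemma ofFn_eq_iff_eq_vec {d : ℕ} {l : List Bool} (h : l.length = d) (x : Fin d → Bool) :
    List.ofFn x = l ↔ x = vec d l := by
  constructor
  · rintro rfl
    exact (vec_ofFn x).symm
  · rintro rfl
    exact ofFn_vec h

lemma vec_zipWith_bne {d : ℕ} {l l' : List Bool} (h : l.length = l'.length) :
    vec d (List.zipWith (· != ·) l l') = vec d l - vec d l' := by
  -- subtraction on `Bool` is `xor`, so both closing `rfl`s are `(a != b) = a - b`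
  funext i
  by_cases hi : i.1 < l.length
  · simp [vec, hi, h ▸ hi]
    rfl
  · simp [vec, not_lt.mp hi, h ▸ not_lt.mp hi]
    rfl

lemma hammingDist_vec {d : ℕ} {v w : List Bool} (hv : v.length = d) (hw : w.length = d) :
    hammingDist (vec d v) (vec d w) = (List.zipWith (· != ·) v w).count true := by
  have hz : (List.zipWith (· != ·) v w).length = d := by simp [hv, hw]
  rw [← ofFn_vec hz, List.count_true_ofFn, vec_zipWith_bne (hv.trans hw.symm), hammingDist]
  congr 1
  ext i
  simp only [mem_filter, mem_univ, true_and, Pi.sub_apply]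
  cases vec d v i <;> cases vec d w i <;> decide

lemma cubeRel_iff_hammingDist {d : ℕ} {v w : List Bool} (hv : v.length = d) (hw : w.length = d) :
    cubeRel v w ↔ hammingDist (vec d v) (vec d w) = 1 := by
  rw [hammingDist_vec hv hw, cubeRel]

lemma genFib_adj_iff {d : ℕ} {f : List Bool} {u v : {w : List Bool // w.length = d ∧ ¬ f <:+: w}} :
    (genFib d f).Adj u v ↔ hammingDist (vec d u.1) (vec d v.1) = 1 := by
  rw [genFib, SimpleGraph.fromRel_adj, cubeRel_iff_hammingDist u.2.1 v.2.1,
    cubeRel_iff_hammingDist v.2.1 u.2.1, hammingDist_comm, or_self]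
  refine ⟨And.right, fun h => ⟨?_, h⟩⟩
  rintro rfl
  simp at h

def cubeMap {ι : Type*} (t : ι → Bool) (σ : Equiv.Perm ι) (t' : ι → Bool) :
    (ι → Bool) ≃ (ι → Bool) :=
  (Equiv.subRight t).trans ((σ.symm.arrowCongr (Equiv.refl Bool)).trans (Equiv.addRight t'))

lemma cubeMap_apply {ι : Type*} (t : ι → Bool) (σ : Equiv.Perm ι) (t' x : ι → Bool) :
    cubeMap t σ t' x = (x - t) ∘ σ + t' :=
  rfl

lemma hammingDist_cubeMap {ι : Type*} [Fintype ι] (t : ι → Bool) (σ : Equiv.Perm ι)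
    (t' x y : ι → Bool) :
    hammingDist (cubeMap t σ t' x) (cubeMap t σ t' y) = hammingDist x y := by
  rw [cubeMap_apply, cubeMap_apply, hammingDist_add_right, hammingDist_comp_perm,
    hammingDist_sub_right]

theorem nonempty_genFib_iso {d : ℕ} {f f' : List Bool} (Φ : (Fin d → Bool) ≃ (Fin d → Bool))
    (hΦ : ∀ x y, hammingDist (Φ x) (Φ y) = hammingDist x y)
    (hinfix : ∀ x, f' <:+: List.ofFn (Φ x) ↔ f <:+: List.ofFn x) :
    Nonempty (genFib d f ≃g genFib d f') := by
  let E : {w : List Bool // w.length = d ∧ ¬ f <:+: w} ≃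
      {w : List Bool // w.length = d ∧ ¬ f' <:+: w} :=
    { toFun u := ⟨List.ofFn (Φ (vec d u.1)), List.length_ofFn, by
        rw [hinfix, ofFn_vec u.2.1]; exact u.2.2⟩
      invFun v := ⟨List.ofFn (Φ.symm (vec d v.1)), List.length_ofFn, by
        rw [← hinfix, Φ.apply_symm_apply, ofFn_vec v.2.1]; exact v.2.2⟩
      left_inv u := Subtype.ext (by simp [vec_ofFn, ofFn_vec u.2.1])
      right_inv v := Subtype.ext (by simp [vec_ofFn, ofFn_vec v.2.1]) }
  refine ⟨⟨E, fun {u v} => ?_⟩⟩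
  rw [genFib_adj_iff, genFib_adj_iff]
  simp only [E, Equiv.coe_fn_mk, vec_ofFn, hΦ]

lemma vec_cons_sub_vec_cons {m : ℕ} (l : List Bool) (c c' : Bool) :
    vec (m + 1) (c :: l) - vec (m + 1) (c' :: l) = Pi.single 0 (c - c') := by
  funext i
  cases i using Fin.cases <;> simp [vec]

lemma vec_append_sub_vec_append {n : ℕ} {l : List Bool} (hl : l.length = n + 1) (c c' : Bool) :
    vec (n + 2) (l ++ [c]) - vec (n + 2) (l ++ [c']) = Pi.single (Fin.last (n + 1)) (c - c') := by
  funext i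
  cases i using Fin.lastCases with
  | last => simp [vec, hl]
  | cast i =>
    have hi : i.1 < l.length := by omega
    simp [vec, hl, Fin.castSucc_ne_last, List.getElem_append_left hi]

/-- `changeWord f` marks the positions where the word `f`, padded by a copy of its first letter in
front and of its last letter at the back, changes its letter. -/
def changeWord (f : List Bool) : List Bool :=
  false :: (List.zipWith (· != ·) f f.tail ++ [false])

lemma count_changeWord (f : List Bool) : (changeWord f).count true = nu f := by
  simp [changeWord, nu]

lemma length_changeWord {n : ℕ} {f : List Bool} (hf : f.length = n + 1) :
    (changeWord f).length = n + 2 := by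
  simp [changeWord, hf]

lemma card_vec_changeWord {n : ℕ} {f : List Bool} (hf : f.length = n + 1) :
    #{i | vec (n + 2) (changeWord f) i = true} = nu f := by
  rw [← List.count_true_ofFn, ofFn_vec (length_changeWord hf), count_changeWord]

lemma vec_changeWord_zero {n : ℕ} (f : List Bool) : vec (n + 2) (changeWord f) 0 = false := rfl

lemma vec_changeWord_last {n : ℕ} {f : List Bool} (hf : f.length = n + 1) :
    vec (n + 2) (changeWord f) (Fin.last (n + 1)) = false := by
  simp [vec, changeWord, hf]

lemma zipWith_bne_cons_append_getLastD (a : Bool) (l : List Bool) :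
    List.zipWith (· != ·) (a :: l) (l ++ [l.getLastD a]) =
      List.zipWith (· != ·) (a :: l) l ++ [false] := by
  induction l generalizing a with
  | nil => simp
  | cons b l ih =>
    simp only [List.getLastD_cons, List.cons_append, List.zipWith_cons_cons, ih b]

lemma changeWord_eq_zipWith {f : List Bool} (hf : f ≠ []) :
    changeWord f = List.zipWith (· != ·) (f.headD false :: f) (f ++ [f.getLastD false]) := by
  obtain ⟨a, l, rfl⟩ := List.exists_cons_of_ne_nil hf
  simp only [changeWord, List.headD_cons, List.getLastD_cons, List.tail_cons, List.cons_append,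
    List.zipWith_cons_cons, bne_self_eq_false, zipWith_bne_cons_append_getLastD]

def anchor (d : ℕ) (f : List Bool) : Fin d → Bool := vec d (f ++ [f.getLastD false])

/-- After translation by `anchor f`, the four words of length `n + 2` containing `f` become
`0`, the unit vector at the last position, `D` and `D` plus the unit vector at position `0`,
where `D = vec (changeWord f)`. -/
def badCore {n : ℕ} (D : Fin (n + 2) → Bool) : Set (Fin (n + 2) → Bool) :=
  Set.range (Pi.single (Fin.last (n + 1))) ∪ Set.range fun c => D + Pi.single 0 c

lemma infix_ofFn_iff {n : ℕ} {f : List Bool} (hf : f.length = n + 1) (x : Fin (n + 2) → Bool) :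
    f <:+: List.ofFn x ↔ x - anchor (n + 2) f ∈ badCore (vec (n + 2) (changeWord f)) := by
  have hne : f ≠ [] := List.ne_nil_of_length_eq_add_one hf
  have hD : vec (n + 2) (changeWord f) = vec (n + 2) (f.headD false :: f) - anchor (n + 2) f := by
    rw [changeWord_eq_zipWith hne, vec_zipWith_bne (by simp), anchor]
  rw [List.infix_iff_of_length_eq_succ (by simp [hf]), badCore, Set.mem_union, Set.mem_range,
    Set.mem_range]
  have hsnoc (c : Bool) := ofFn_eq_iff_eq_vec (by simp [hf] : (f ++ [c]).length = n + 2) x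
  have hcons (c : Bool) := ofFn_eq_iff_eq_vec (by simp [hf] : (c :: f).length = n + 2) x
  simp only [hsnoc, hcons]
  refine or_congr (exists_eq_iff_exists_eq_sub (b := f.getLastD false)
    (fun c => vec_append_sub_vec_append hf c _) x) (exists_eq_iff_exists_eq_sub
    (b := f.headD false) (fun c => ?_) x)
  rw [← sub_add_sub_cancel _ (vec (n + 2) (f.headD false :: f)), vec_cons_sub_vec_cons, hD]
  exact add_comm _ _

lemma comp_mem_badCore_iff {n : ℕ} {σ : Equiv.Perm (Fin (n + 2))} (h0 : σ 0 = 0)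
    (hlast : σ (Fin.last (n + 1)) = Fin.last (n + 1)) (D y : Fin (n + 2) → Bool) :
    y ∘ σ ∈ badCore (D ∘ σ) ↔ y ∈ badCore D := by
  have hinj := σ.surjective.injective_comp_right (γ := Bool)
  simp only [badCore, Set.mem_union, Set.mem_range]
  refine or_congr (exists_congr fun c => ?_) (exists_congr fun c => ?_)
  · exact eq_comm.trans ((hinj.eq_iff' (Pi.single_comp_perm hlast c)).trans eq_comm)
  · have h : (D + Pi.single 0 c) ∘ σ = D ∘ σ + Pi.single 0 c := by
      rw [Pi.add_comp, Pi.single_comp_perm h0]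
    exact eq_comm.trans ((hinj.eq_iff' h).trans eq_comm)

end GenFib

theorem stmt3 (d : ℕ) (hd : 2 ≤ d) (f f' : List Bool)
    (hf : f.length = d - 1) (hf' : f'.length = d - 1) (hnu : nu f = nu f') :
    Nonempty (genFib d f ≃g genFib d f') := by
  open GenFib in
  obtain ⟨n, rfl⟩ : ∃ n, d = n + 2 := ⟨d - 2, by omega⟩
  replace hf : f.length = n + 1 := hf
  replace hf' : f'.length = n + 1 := hf'
  obtain ⟨σ, hσ, hσD⟩ := Equiv.Perm.exists_comp_eq_of_card_eq {0, Fin.last (n + 1)}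
    (D := vec (n + 2) (changeWord f)) (D' := vec (n + 2) (changeWord f'))
    (by simp [vec_changeWord_zero, vec_changeWord_last hf])
    (by simp [vec_changeWord_zero, vec_changeWord_last hf'])
    (by rw [card_vec_changeWord hf, card_vec_changeWord hf', hnu])
  refine nonempty_genFib_iso (cubeMap (anchor _ f) σ (anchor _ f')) (hammingDist_cubeMap _ _ _)
    fun x => ?_
  rw [infix_ofFn_iff hf', infix_ofFn_iff hf, cubeMap_apply, add_sub_cancel_right, ← hσD,
    comp_mem_badCore_iff (hσ 0 (by simp)) (hσ _ (by simp))]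
end

section
/- For every integer k ≥ 2, the number of binary strings of length 3k−1 that contain 0^k 1^k as a consecutive substring equals k·2^{k−1}. -/
open List

section InsertInfix

variable {α : Type*}

def insertInfix (i : ℕ) (f t : List α) : List α := t.take i ++ f ++ t.drop i

@[simp]
lemma length_insertInfix (i : ℕ) (f t : List α) :
    (insertInfix i f t).length = f.length + t.length := by
  simp only [insertInfix, length_append, length_take, length_drop]
  omega

lemma infix_insertInfix (i : ℕ) (f t : List α) : f <:+: insertInfix i f t :=
  ⟨_, _, rfl⟩

lemma insertInfix_length_append (u f v : List α) :
    insertInfix u.length f (u ++ v) = u ++ f ++ v := by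
  simp [insertInfix]

lemma insertInfix_injective_of_le_length {i : ℕ} {f t s : List α}
    (ht : i ≤ t.length) (hs : i ≤ s.length)
    (h : insertInfix i f t = insertInfix i f s) : t = s := by
  obtain ⟨htake, hrest⟩ := append_inj (by simpa only [insertInfix, append_assoc] using h)
    (by simp [ht, hs])
  rw [← take_append_drop i t, ← take_append_drop i s, htake, append_cancel_left hrest]

end InsertInfix

lemma getElem?_append_replicate_append_replicate {α : Type*} (u v : List α) (a b : α)
    {k j : ℕ} (hj : j < 2 * k) :
    (u ++ (replicate k a ++ replicate k b) ++ v)[u.length + j]? =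
      some (if j < k then a else b) := by
  rw [append_assoc, getElem?_append_right (by omega), Nat.add_sub_cancel_left,
    getElem?_append_left (by simp; omega), getElem?_append,
    length_replicate]
  split_ifs <;> simp [getElem?_replicate] <;> omega

lemma length_eq_of_append_blocks_append {k : ℕ} {u₁ v₁ u₂ v₂ : List Bool}
    (h : u₁ ++ (replicate k false ++ replicate k true) ++ v₁ =
      u₂ ++ (replicate k false ++ replicate k true) ++ v₂)
    (h₁ : u₁.length < u₂.length + k) (h₂ : u₂.length < u₁.length + k) :
    u₁.length = u₂.length := by
  wlog hlt : u₁.length < u₂.length generalizing u₁ v₁ u₂ v₂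
  · rcases (not_lt.1 hlt).lt_or_eq with hgt | heq
    · exact (this h.symm h₂ h₁ hgt).symm
    · exact heq.symm
  -- position `u₁.length + k` carries a `1` of the first occurrence and a `0` of the second
  have hone := getElem?_append_replicate_append_replicate u₁ v₁ false true
    (j := k) (k := k) (by omega)
  have hzero := getElem?_append_replicate_append_replicate u₂ v₂ false true
    (j := u₁.length + k - u₂.length) (k := k) (by omega)
  rw [if_neg (lt_irrefl k)] at hone
  rw [if_pos (by omega), ← h,
    show u₂.length + (u₁.length + k - u₂.length) = u₁.length + k by omega, hone] at hzero
  exact absurd hzero (by decide)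

lemma insertInfix_blocks_injective (k : ℕ) :
    Function.Injective fun x : Fin k × List.Vector Bool (k - 1) =>
      insertInfix x.1 (replicate k false ++ replicate k true) x.2.toList := by
  rintro ⟨i, t⟩ ⟨j, s⟩ h
  have hi : (i : ℕ) ≤ t.toList.length := by simp; omega
  have hj : (j : ℕ) ≤ s.toList.length := by simp; omega
  have hij : i = j := by
    have := length_eq_of_append_blocks_append h (by simp; omega) (by simp; omega)
    simp only [length_take, Nat.min_eq_left hi, Nat.min_eq_left hj] at this
    exact Fin.ext this
  subst hij
  exact Prod.ext rfl (List.Vector.toList_injective (insertInfix_injective_of_le_length hi hj h))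

theorem stmt7 (k : ℕ) (hk : 2 ≤ k) :
    {w : List Bool | w.length = 3 * k - 1 ∧
      (List.replicate k false ++ List.replicate k true) <:+: w}.ncard = k * 2 ^ (k - 1) := by
  set p := replicate k false ++ replicate k true
  have hrange :
      Set.range (fun x : Fin k × List.Vector Bool (k - 1) => insertInfix x.1 p x.2.toList) =
        {w | w.length = 3 * k - 1 ∧ p <:+: w} := by
    ext w
    constructor
    · rintro ⟨⟨i, t⟩, rfl⟩
      exact ⟨by simp [p]; omega, infix_insertInfix _ _ _⟩
    · rintro ⟨hw, u, v, rfl⟩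
      have hlen : u.length + v.length = k - 1 := by simp [p] at hw; omega
      exact ⟨(⟨u.length, by omega⟩, ⟨u ++ v, by simpa⟩),
        insertInfix_length_append u p v⟩
  rw [← hrange, Set.ncard_range_of_injective (insertInfix_blocks_injective k)]
  simp [card_vector]
end

section
/- For every integer k ≥ 2, the number of binary strings of length 3k−1 that contain 0^{k+1} 1^{k−1} as a consecutive substring equals k·2^{k−1}. -/
/-!
A word of length `|f| + n` containing `f` is `u ++ f ++ t` with `|u| + |t| = n`. If `f` has no
period in `[1, n]`, two such occurrences of `f` would overlap with a shift in `[1, n]` and exhibit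
that period, so the occurrence is unique and the words correspond bijectively to a position
`|u| ∈ [0, n]` together with the `n` free letters of `u ++ t`. The word `0^{k+1} 1^{k-1}` has no
period `p ≤ k + 1`: position `k + 1 - p` holds a `0`, position `k + 1` a `1`.
-/

variable {α : Type*}

/-- `f` has period `p`: `f[i] = f[i + p]` whenever both are defined. -/
def HasPeriod (f : List α) (p : ℕ) : Prop :=
  f.drop p <+: f

lemma hasPeriod_length_of_append_eq {f x t₁ t₂ : List α} (h : f ++ t₁ = x ++ (f ++ t₂)) :
    HasPeriod f x.length := by
  have hdrop : f.drop x.length <+: f ++ t₂ := by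
    rw [← List.drop_left (l₁ := x) (l₂ := f ++ t₂), ← h]
    exact (List.prefix_append f t₁).drop _
  exact List.prefix_of_prefix_length_le hdrop (List.prefix_append f t₂) (by simp)

lemma eq_of_append_append_eq_of_not_hasPeriod {f u₁ u₂ t₁ t₂ : List α} {n : ℕ}
    (hf : ∀ p, 0 < p → p ≤ n → ¬ HasPeriod f p) (h : u₁ ++ (f ++ t₁) = u₂ ++ (f ++ t₂))
    (h₁ : u₁.length ≤ n) (h₂ : u₂.length ≤ n) : u₁ = u₂ ∧ t₁ = t₂ := by
  wlog hle : u₁.length ≤ u₂.length generalizing u₁ u₂ t₁ t₂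
  · exact (this h.symm h₂ h₁ (by omega)).imp Eq.symm Eq.symm
  obtain ⟨x, rfl, hx⟩ | ⟨x, rfl, -⟩ := List.append_eq_append_iff.mp h
  · obtain rfl : x = [] := by
      by_contra hne
      simp only [List.length_append] at h₂
      exact hf x.length (List.length_pos_of_ne_nil hne) (by omega)
        (hasPeriod_length_of_append_eq hx)
    simpa using h
  · obtain rfl : x = [] := by simpa using hle
    simpa using h

theorem ncard_setOf_length_infix_of_not_hasPeriod [Fintype α] (f : List α) (n : ℕ)
    (hf : ∀ p, 0 < p → p ≤ n → ¬ HasPeriod f p) :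
    {w : List α | w.length = f.length + n ∧ f <:+: w}.ncard = (n + 1) * Fintype.card α ^ n := by
  set insertAt : Fin (n + 1) × List.Vector α n → List α :=
    fun iv => iv.2.1.take iv.1 ++ (f ++ iv.2.1.drop iv.1)
  have take_length (iv : Fin (n + 1) × List.Vector α n) : (iv.2.1.take iv.1).length = iv.1 := by
    simp only [List.length_take, iv.2.2]
    omega
  have hinj : insertAt.Injective := by
    rintro iv jv h
    obtain ⟨htake, hdrop⟩ := eq_of_append_append_eq_of_not_hasPeriod hf h
      (by rw [take_length]; omega) (by rw [take_length]; omega)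
    have hi : iv.1 = jv.1 := Fin.ext (by rw [← take_length iv, ← take_length jv, htake])
    have hv : iv.2 = jv.2 := Subtype.ext <| by
      rw [← List.take_append_drop iv.1 iv.2.1, ← List.take_append_drop jv.1 jv.2.1, htake, hdrop]
    exact Prod.ext hi hv
  have hrange : {w : List α | w.length = f.length + n ∧ f <:+: w} = Set.range insertAt := by
    ext w
    constructor
    · rintro ⟨hlen, u, t, rfl⟩
      simp only [List.length_append] at hlen
      refine ⟨(⟨u.length, by omega⟩, ⟨u ++ t, by rw [List.length_append]; omega⟩), ?_⟩
      simp [insertAt]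
    · rintro ⟨iv, rfl⟩
      refine ⟨?_, _, _, List.append_assoc _ _ _⟩
      simp only [insertAt, List.length_append, List.length_take, List.length_drop, iv.2.2]
      omega
  rw [hrange, ← Nat.card_coe_set_eq, Nat.card_range_of_injective hinj]
  simp [Nat.card_eq_fintype_card, card_vector]

lemma not_hasPeriod_replicate_append_replicate {x y : α} (hxy : x ≠ y) {a b p : ℕ} (hb : 0 < b)
    (hp : 0 < p) (hpa : p ≤ a) : ¬ HasPeriod (List.replicate a x ++ List.replicate b y) p := by
  intro hper
  have hdrop : (List.replicate a x ++ List.replicate b y).drop p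
      = List.replicate (a - p) x ++ List.replicate b y := by
    simp [List.drop_append, List.drop_replicate, Nat.sub_eq_zero_of_le hpa]
  rw [HasPeriod, hdrop] at hper
  have hlen : a - p < (List.replicate (a - p) x ++ List.replicate b y).length := by
    simp only [List.length_append, List.length_replicate]
    omega
  have key := hper.getElem hlen
  rw [List.getElem_append_right (by simp), List.getElem_append_left (by simp; omega)] at key
  simp only [List.getElem_replicate] at key
  exact hxy key.symm

theorem stmt8 (k : ℕ) (hk : 2 ≤ k) :
    {w : List Bool | w.length = 3 * k - 1 ∧
      (List.replicate (k + 1) false ++ List.replicate (k - 1) true) <:+: w}.ncard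
      = k * 2 ^ (k - 1) := by
  have hlen : 3 * k - 1
      = (List.replicate (k + 1) false ++ List.replicate (k - 1) true).length + (k - 1) := by
    simp only [List.length_append, List.length_replicate]
    omega
  rw [hlen, ncard_setOf_length_infix_of_not_hasPeriod _ _ fun p hp hpk =>
      not_hasPeriod_replicate_append_replicate Bool.false_ne_true (by omega) hp (by omega),
    Fintype.card_bool, Nat.sub_add_cancel (by omega)]
end

section
/- For all integers k ≥ 1 and d ≥ k+1, the number of binary strings of length d that do not contain 0^k as a consecutive substring is strictly smaller than the number of binary strings of length d that do not contain 0^k 1 as a consecutive substring. -/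
/-
Avoiding `0^k` is stronger than avoiding `0^k 1`, since `0^k` is a prefix of `0^k 1`; and the
all-zero string of length `d ≥ k` avoids `0^k 1` but contains `0^k`, so the inclusion is strict.
-/

namespace List

variable {α : Type*}

theorem finite_setOf_length_eq_and [Finite α] (d : ℕ) (p : List α → Prop) :
    {w : List α | w.length = d ∧ p w}.Finite :=
  (finite_length_eq α d).subset fun _ hw => hw.1

theorem setOf_not_infix_subset {f g : List α} (hfg : f <:+: g) (d : ℕ) :
    {w : List α | w.length = d ∧ ¬ f <:+: w} ⊆ {w | w.length = d ∧ ¬ g <:+: w} :=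
  fun _ ⟨hlen, hf⟩ => ⟨hlen, fun hg => hf (hfg.trans hg)⟩

theorem replicate_infix_replicate {a : α} {k d : ℕ} (h : k ≤ d) :
    replicate k a <:+: replicate d a :=
  infix_replicate_iff.2 ⟨by simpa using h, by simp⟩

theorem not_infix_replicate_of_mem {f : List α} {a b : α} (hb : b ∈ f) (hab : b ≠ a) (d : ℕ) :
    ¬ f <:+: replicate d a :=
  fun h => hab (eq_of_mem_replicate (h.subset hb))

end List

theorem stmt10_general (k d : ℕ) (hd : k + 1 ≤ d) :
    {w : List Bool | w.length = d ∧ ¬ List.replicate k false <:+: w}.ncard <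
    {w : List Bool | w.length = d ∧ ¬ (List.replicate k false ++ [true]) <:+: w}.ncard := by
  refine Set.ncard_lt_ncard
    ⟨List.setOf_not_infix_subset (List.prefix_append _ _).isInfix d, fun hsub => ?_⟩
    (List.finite_setOf_length_eq_and d _)
  have hzeros : List.replicate d false ∈
      {w : List Bool | w.length = d ∧ ¬ (List.replicate k false ++ [true]) <:+: w} :=
    ⟨List.length_replicate,
      List.not_infix_replicate_of_mem (b := true) (by simp) Bool.noConfusion d⟩
  exact (hsub hzeros).2 (List.replicate_infix_replicate (by omega))

theorem stmt10 (k d : ℕ) (hk : 1 ≤ k) (hd : k + 1 ≤ d) :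
    {w : List Bool | w.length = d ∧ ¬ List.replicate k false <:+: w}.ncard <
    {w : List Bool | w.length = d ∧ ¬ (List.replicate k false ++ [true]) <:+: w}.ncard :=
  stmt10_general k d hd
end

section
/- Let d ≥ 2 and let f = f_1…f_{d−1} be a binary string of length d−1. Then the Hamming distance between the two strings f̄_1·f and f·f̄_{d−1} (each of length d, where b̄ denotes the complement of the bit b) equals ν(f) + 2. -/
theorem hDist_nil_left (w : List Bool) : hDist [] w = 0 := rfl

theorem hDist_cons_cons (a b : Bool) (v w : List Bool) :
    hDist (a :: v) (b :: w) = (a != b).toNat + hDist v w := by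
  cases h : a != b <;> simp [hDist, h, Nat.add_comm]

theorem nu_singleton (a : Bool) : nu [a] = 0 := rfl

theorem nu_cons_cons (a b : Bool) (l : List Bool) :
    nu (a :: b :: l) = (a != b).toNat + nu (b :: l) :=
  -- `nu f` unfolds to `hDist f f.tail`
  hDist_cons_cons a b (b :: l) l

-- Entry `i` of `l ++ [t]` is entry `i + 1` of `a :: l`, so the comparison runs over adjacent
-- pairs of `a :: l` and ends with its last bit against `t`.
theorem hDist_cons_shift (a t : Bool) (l : List Bool) :
    hDist (a :: l) (l ++ [t]) = nu (a :: l) + (l.getLastD a != t).toNat := by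
  induction l generalizing a with
  | nil =>
    rw [nu_singleton, List.nil_append, hDist_cons_cons, hDist_nil_left, List.getLastD_nil,
      Nat.add_zero, Nat.zero_add]
  | cons c l ih =>
    rw [List.cons_append, hDist_cons_cons, ih, nu_cons_cons, List.getLastD_cons, Nat.add_assoc]

theorem stmt13 (d : ℕ) (hd : 2 ≤ d) (f : List Bool) (hf : f.length = d - 1) :
    hDist ((!f.head!) :: f) (f ++ [!f.getLast!]) = nu f + 2 := by
  obtain ⟨a, l, rfl⟩ : ∃ a l, f = a :: l :=
    List.exists_cons_of_ne_nil (by rintro rfl; simp at hf; omega)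
  rw [List.head!_cons, List.getLast!_cons_eq_getLastD, List.cons_append, hDist_cons_cons,
    hDist_cons_shift, Bool.not_bne_self, Bool.bne_not_self, Bool.toNat_true]
  omega
end

section
/- Let k ≥ 2 and let α be the map on binary strings of length 3k−1 defined by α(u_1…u_{3k−1}) = u_1…u_k ū_{2k} u_{k+1}…u_{2k−1} u_{2k+1}…u_{3k−1} (i.e., the bit u_{2k} is complemented and moved to position k+1, shifting u_{k+1},…,u_{2k−1} one position to the right). Then for every binary string u of length 3k−1 that does not contain 0^k 1^k as a consecutive substring, the string α(u) does not contain 0^{k+1} 1^{k−1} as a consecutive substring. -/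
/-!
Write `u = A ++ B ++ b :: C` with `|A| = k`, `|B| = |C| = k - 1`, so that
`α(u) = A ++ !b :: B ++ C`.
An occurrence of `0^{k+1} 1^{k-1}` in `α(u)` starts at some `i ≤ k - 1`, so its zero block covers
the moved bit: `!b = 0`, `A` ends in `k - i` zeros, `B = 0^i 1^{k-1-i}` and `C` starts with `1^i`.
Putting `b = 1` back at its place gives `0^k 1^k` in `u` at the same position `i`.
-/

namespace List

theorem take_append_take_drop_append_getD_cons_drop {α : Type*} (u : List α) (d : α)
    {i j : ℕ} (h : i + j < u.length) :
    u.take i ++ ((u.drop i).take j ++ u.getD (i + j) d :: u.drop (i + j + 1)) = u := by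
  rw [getD_eq_getElem u d h, ← drop_eq_getElem_cons h, ← drop_drop, take_append_drop,
    take_append_drop]

theorem replicate_append_replicate_infix_of_infix_append_not_cons {A B C : List Bool} {n : ℕ}
    (a b : Bool) (hA : A.length = n + 1) (hB : B.length = n) (hC : C.length ≤ n)
    (hw : replicate (n + 2) a ++ replicate n (!a) <:+: A ++ ((!b) :: (B ++ C))) :
    replicate (n + 1) a ++ replicate (n + 1) (!a) <:+: A ++ (B ++ b :: C) := by
  obtain ⟨s, t, hst⟩ := hw
  set i := s.length
  have hi : i ≤ n := by
    have := congrArg length hst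
    simp only [length_append, length_cons, length_replicate] at this
    omega
  -- Cut the occurrence at the seams of `A ++ !b :: B ++ C`.
  have hsplit : s ++ (replicate (n + 2) a ++ replicate n (!a)) ++ t =
      (s ++ replicate (n + 1 - i) a) ++
        (a :: ((replicate i a ++ replicate (n - i) (!a)) ++ (replicate i (!a) ++ t))) := by
    rw [show n + 2 = n + 1 - i + (i + 1) by omega, show n = n - i + i by omega]
    simp only [replicate_add, replicate_succ, append_assoc, cons_append, Nat.add_sub_cancel]
  rw [hsplit] at hst
  obtain ⟨rfl, hrest⟩ := append_inj hst
    (by simp only [length_append, length_replicate, i, hA]; omega)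
  obtain ⟨hb, hBC⟩ := cons_eq_cons.mp hrest
  obtain ⟨rfl, rfl⟩ := append_inj hBC
    (by simp only [length_append, length_replicate, hB]; omega)
  obtain rfl : b = !a := by simp [hb]
  refine ⟨s, t, ?_⟩
  calc s ++ (replicate (n + 1) a ++ replicate (n + 1) (!a)) ++ t
      = s ++ (replicate (n + 1 - i) a ++ replicate i a ++
          (replicate (n - i) (!a) ++ replicate (1 + i) (!a))) ++ t := by
        rw [← replicate_add, ← replicate_add, show n + 1 - i + i = n + 1 by omega,
          show n - i + (1 + i) = n + 1 by omega]
    _ = _ := by simp only [replicate_add, replicate_one, append_assoc, cons_append, nil_append]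

end List

theorem stmt18_general (k : ℕ) (u : List Bool) (hu : u.length = 3 * k - 1)
    (h : ¬ (List.replicate k false ++ List.replicate k true) <:+: u) :
    ¬ (List.replicate (k + 1) false ++ List.replicate (k - 1) true) <:+:
      (u.take k ++ (!(u.getD (2 * k - 1) false)) ::
        ((u.drop k).take (k - 1) ++ u.drop (2 * k))) := by
  obtain _ | n := k
  · exact absurd List.nil_infix h
  rw [Nat.add_sub_cancel, show 2 * (n + 1) - 1 = n + 1 + n by omega,
    show 2 * (n + 1) = n + 1 + n + 1 by omega]
  intro hw
  refine h ?_
  rw [← u.take_append_take_drop_append_getD_cons_drop false (by omega : n + 1 + n < u.length)]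
  exact List.replicate_append_replicate_infix_of_infix_append_not_cons false _
    (by simp only [List.length_take, hu]; omega)
    (by simp only [List.length_take, List.length_drop, hu]; omega)
    (by simp only [List.length_drop, hu]; omega) hw

theorem stmt18 (k : ℕ) (hk : 2 ≤ k) (u : List Bool) (hu : u.length = 3 * k - 1)
    (h : ¬ (List.replicate k false ++ List.replicate k true) <:+: u) :
    ¬ (List.replicate (k + 1) false ++ List.replicate (k - 1) true) <:+:
      (u.take k ++ (!(u.getD (2 * k - 1) false)) ::
        ((u.drop k).take (k - 1) ++ u.drop (2 * k))) :=
  stmt18_general k u hu h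
end

section
/- The generalized Fibonacci cubes Q_6(0110) and Q_6(0100) are not isomorphic, even though ν(0110) = ν(0100) = 2. -/
/-! Isomorphic graphs have equally many edges, and `Q_6(0110)` has 132 edges while `Q_6(0100)`
has 133; both counts are evaluated by the kernel. -/

instance (v w : List Bool) : Decidable (cubeRel v w) := by unfold cubeRel; infer_instance

instance (d : ℕ) (f : List Bool) : DecidableRel (genFib d f).Adj := fun v w =>
  decidable_of_iff _ (SimpleGraph.fromRel_adj _ v w).symm

instance (d : ℕ) (f : List Bool) : Fintype {w : List Bool // w.length = d ∧ ¬ f <:+: w} :=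
  Fintype.ofEquiv {v : List.Vector Bool d // ¬ f <:+: v.toList}
    (Equiv.subtypeSubtypeEquivSubtypeInter (fun w : List Bool => w.length = d) (¬ f <:+: ·))

set_option maxRecDepth 40000 in
lemma card_edgeFinset_genFib_six_0110 :
    (genFib 6 [false, true, true, false]).edgeFinset.card = 132 := by
  decide

set_option maxRecDepth 40000 in
lemma card_edgeFinset_genFib_six_0100 :
    (genFib 6 [false, true, false, false]).edgeFinset.card = 133 := by
  decide

theorem stmt19 :
    ¬ Nonempty (genFib 6 [false, true, true, false] ≃g genFib 6 [false, true, false, false]) ∧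
    nu [false, true, true, false] = 2 ∧ nu [false, true, false, false] = 2 := by
  refine ⟨fun ⟨φ⟩ => ?_, by decide, by decide⟩
  have h := φ.card_edgeFinset_eq
  rw [card_edgeFinset_genFib_six_0110, card_edgeFinset_genFib_six_0100] at h
  omega
end
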